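/- arXiv:1108.3958 — 12 statements merged into one kernel-verified Lean document; each statement's English description precedes it below -/
import Mathlib

section
/- Let n ≥ 1 and let f : Fin n → Fin n. The submonoid of Function.End (Fin n) generated by f is synchronizing if and only if f has a unique periodic point, i.e., there is exactly one x : Fin n such that f^[k] x = x for some k ≥ 1. -/
open SimpleGraph

/-- A transformation monoid is *synchronizing* if it contains an element of rank 1,
i.e. whose range has exactly one element. -/
def IsSynchronizing {n : ℕ} (M : Submonoid (Function.End (Fin n))) : Prop :=
  ∃ f ∈ M, ∃ c : Fin n, Set.range f = {c}

/-- The graph `Gr(M)` of a transformation monoid `M`: distinct vertices `v, w` are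
adjacent iff no element of `M` identifies them. -/
def Gr {n : ℕ} (M : Submonoid (Function.End (Fin n))) : SimpleGraph (Fin n) where
  Adj v w := v ≠ w ∧ ∀ f ∈ M, f v ≠ f w
  symm := ⟨fun v w ⟨h1, h2⟩ => ⟨h1.symm, fun f hf => (h2 f hf).symm⟩⟩
  loopless := ⟨fun v ⟨h1, _⟩ => h1 rfl⟩

/-- The monoid of endomorphisms of a graph `X`, as a submonoid of `Function.End`. -/
def GraphEnd {n : ℕ} (X : SimpleGraph (Fin n)) : Submonoid (Function.End (Fin n)) where
  carrier := {f | ∀ ⦃v w⦄, X.Adj v w → X.Adj (f v) (f w)}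
  one_mem' := by intro v w h; exact h
  mul_mem' := by intro f g hf hg v w h; exact hf (hg h)

/-- The hull of a graph: `Hull(X) = Gr(End(X))`. -/
def Hull {n : ℕ} (X : SimpleGraph (Fin n)) : SimpleGraph (Fin n) := Gr (GraphEnd X)

/-- The derived graph `X'` of `X`: keep only the edges lying in a clique of
maximum size `ω(X)`. -/
def derivedGraph {n : ℕ} (X : SimpleGraph (Fin n)) : SimpleGraph (Fin n) where
  Adj v w := X.Adj v w ∧ ∃ s : Finset (Fin n), X.IsNClique X.cliqueNum s ∧ v ∈ s ∧ w ∈ s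
  symm := ⟨fun v w ⟨h, s, hs, hv, hw⟩ => ⟨h.symm, s, hs, hw, hv⟩⟩
  loopless := ⟨fun v ⟨h, _⟩ => h.ne rfl⟩

/-!
If some iterate `f^[k]` is constant with value `c`, then `c` is a fixed point and every periodic
point lies in the range of `f^[k]`, so `c` is the only periodic point. Conversely, on a finite set
every orbit eventually enters the periodic points; if `c` is the only one, every orbit is
eventually constant at `c`, uniformly in the starting point by finiteness. The powers of `f` in
`Function.End` are exactly its iterates, so the monoid generated by `f` has a rank one element
precisely when some iterate of `f` is constant.
-/

namespace Function

variable {α : Type*} {f : α → α} {c : α}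

theorem periodicPts_subset_range_iterate (f : α → α) (k : ℕ) :
    periodicPts f ⊆ Set.range f^[k] := by
  rintro y ⟨m, hm, hy⟩
  exact periodicPts_subset_range (mk_mem_periodicPts hm (hy.iterate k))

theorem isFixedPt_of_range_iterate_eq_singleton {k : ℕ} (h : Set.range f^[k] = {c}) :
    IsFixedPt f c := by
  have hrange : ∀ y, f^[k] y = c := fun y => h.subset (Set.mem_range_self y)
  calc f c = f (f^[k] c) := by rw [hrange c]
    _ = f^[k] (f c) := (Commute.iterate_self f k).eq c |>.symm
    _ = c := hrange (f c)

theorem periodicPts_eq_singleton_of_range_iterate {k : ℕ} (h : Set.range f^[k] = {c}) :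
    periodicPts f = {c} :=
  Set.eq_singleton_iff_unique_mem.2
    ⟨mk_mem_periodicPts one_pos ((isFixedPt_of_range_iterate_eq_singleton h).isPeriodicPt 1),
      fun _ hy => h.subset (periodicPts_subset_range_iterate f k hy)⟩

theorem iterate_mem_periodicPts_of_iterate_eq {x : α} {i j : ℕ} (hij : i < j)
    (h : f^[i] x = f^[j] x) : f^[i] x ∈ periodicPts f := by
  refine mk_mem_periodicPts (Nat.sub_pos_of_lt hij) ?_
  rw [IsPeriodicPt, IsFixedPt, ← iterate_add_apply, Nat.sub_add_cancel hij.le, h]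

theorem exists_iterate_mem_periodicPts [Finite α] (f : α → α) (x : α) :
    ∃ i, f^[i] x ∈ periodicPts f := by
  obtain ⟨i, j, hne, h⟩ := Finite.exists_ne_map_eq_of_infinite (f^[·] x)
  rcases hne.lt_or_gt with hij | hji
  · exact ⟨i, iterate_mem_periodicPts_of_iterate_eq hij h⟩
  · exact ⟨j, iterate_mem_periodicPts_of_iterate_eq hji h.symm⟩

theorem isFixedPt_of_periodicPts_eq_singleton (h : periodicPts f = {c}) : IsFixedPt f c := by
  obtain ⟨m, hm, hcm⟩ : c ∈ periodicPts f := h ▸ rfl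
  exact h.subset (mk_mem_periodicPts hm hcm.apply)

theorem exists_range_iterate_eq_singleton [Finite α] (h : periodicPts f = {c}) :
    ∃ k, Set.range f^[k] = {c} := by
  have hc := isFixedPt_of_periodicPts_eq_singleton h
  have hevent : ∀ᶠ k in Filter.atTop, ∀ x, f^[k] x = c := by
    refine Filter.eventually_all.2 fun x => ?_
    obtain ⟨i, hi⟩ := exists_iterate_mem_periodicPts f x
    rw [h] at hi
    refine Filter.eventually_atTop.2 ⟨i, fun k hk => ?_⟩
    obtain ⟨l, rfl⟩ := Nat.exists_eq_add_of_le' hk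
    rw [iterate_add_apply, hi, hc.iterate l]
  obtain ⟨k, hk⟩ := hevent.exists
  exact ⟨k, Set.eq_singleton_iff_unique_mem.2 ⟨⟨c, hk c⟩, fun _ ⟨x, hx⟩ => hx ▸ hk x⟩⟩

theorem exists_range_iterate_eq_singleton_iff [Finite α] :
    (∃ k, Set.range f^[k] = {c}) ↔ periodicPts f = {c} :=
  ⟨fun ⟨_, h⟩ => periodicPts_eq_singleton_of_range_iterate h, exists_range_iterate_eq_singleton⟩

end Function

theorem isSynchronizing_closure_singleton_iff {n : ℕ} (f : Function.End (Fin n)) :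
    IsSynchronizing (Submonoid.closure {f}) ↔ ∃ k, ∃ c : Fin n, Set.range f^[k] = {c} := by
  simp only [IsSynchronizing, Submonoid.mem_closure_singleton]
  constructor
  · rintro ⟨_, ⟨k, rfl⟩, c, hc⟩
    exact ⟨k, c, hc⟩
  · rintro ⟨k, c, hc⟩
    exact ⟨f ^ k, ⟨k, rfl⟩, c, hc⟩

theorem single_generator_synchronizing_iff_unique_periodic_point_general
    (n : ℕ) (f : Function.End (Fin n)) :
    IsSynchronizing (Submonoid.closure {f}) ↔
      ∃! x : Fin n, ∃ k ≥ 1, f^[k] x = x := by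
  rw [isSynchronizing_closure_singleton_iff, exists_comm]
  -- `x ∈ periodicPts f` unfolds to `∃ k > 0, f^[k] x = x`
  exact exists_congr fun c =>
    Function.exists_range_iterate_eq_singleton_iff.trans Set.eq_singleton_iff_unique_mem

theorem single_generator_synchronizing_iff_unique_periodic_point
    (n : ℕ) (hn : 1 ≤ n) (f : Function.End (Fin n)) :
    IsSynchronizing (Submonoid.closure {f}) ↔
      ∃! x : Fin n, ∃ k ≥ 1, f^[k] x = x :=
  single_generator_synchronizing_iff_unique_periodic_point_general n f
end

section
/- Let M be a transformation monoid on Fin n with n ≥ 1. Then the clique number of Gr(M) equals the chromatic number of Gr(M), and both equal the minimum, over f ∈ M, of the cardinality of the range of f. -/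
open SimpleGraph

/-!
Let `f ∈ M` have minimal rank `r`. The map `f` itself is a proper colouring of `Gr M` with
`r` colours, since adjacent vertices are never identified by `f`. Conversely the range of `f`
is a clique: if some `g ∈ M` identified two of its points, `g * f ∈ M` would have rank below `r`.
Hence `r ≤ ω ≤ χ ≤ r`.
-/

theorem SimpleGraph.IsClique.ncard_le_cliqueNum {α : Type*} [Finite α] {G : SimpleGraph α}
    {s : Set α} (hs : G.IsClique s) : s.ncard ≤ G.cliqueNum := by
  classical
  have := Fintype.ofFinite α
  rw [Set.ncard_eq_toFinset_card']
  exact IsClique.card_le_cliqueNum (tc := by simpa using hs)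

section Gr

variable {n : ℕ} {M : Submonoid (Function.End (Fin n))} {f : Function.End (Fin n)}

theorem gr_adj {v w : Fin n} : (Gr M).Adj v w ↔ v ≠ w ∧ ∀ g ∈ M, g v ≠ g w := Iff.rfl

theorem colorable_gr_ncard_range (hf : f ∈ M) : (Gr M).Colorable (Set.range f).ncard := by
  classical
  let C : (Gr M).Coloring (Set.range f) := Coloring.mk (Set.rangeFactorization f)
    fun hadj h => (gr_adj.1 hadj).2 f hf (congrArg Subtype.val h)
  simpa only [← Nat.card_eq_fintype_card, Nat.card_coe_set_eq] using C.colorable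

theorem isClique_gr_range_of_ncard_range_le
    (hf : f ∈ M) (hmin : ∀ g ∈ M, (Set.range f).ncard ≤ (Set.range g).ncard) :
    (Gr M).IsClique (Set.range f) := by
  intro v hv w hw hvw
  refine gr_adj.2 ⟨hvw, fun g hg hgvw => hvw ?_⟩
  have hrank : (Set.range f).ncard ≤ (g '' Set.range f).ncard := by
    simpa only [Function.End.mul_def, Set.range_comp g f] using hmin (g * f) (M.mul_mem hg hf)
  exact Set.injOn_of_ncard_image_eq (hrank.antisymm' (Set.ncard_image_le (Set.toFinite _)))
    (Set.toFinite _) hv hw hgvw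

end Gr

theorem cliqueNum_Gr_eq_chromaticNumber_eq_min_rank_general (n : ℕ)
    (M : Submonoid (Function.End (Fin n))) :
    (Gr M).cliqueNum = sInf {k : ℕ | ∃ f ∈ M, (Set.range f).ncard = k} ∧
    (Gr M).chromaticNumber = ((sInf {k : ℕ | ∃ f ∈ M, (Set.range f).ncard = k} : ℕ) : ℕ∞) := by
  set r := sInf {k : ℕ | ∃ f ∈ M, (Set.range f).ncard = k}
  obtain ⟨f, hf, hrank⟩ : r ∈ {k : ℕ | ∃ f ∈ M, (Set.range f).ncard = k} :=
    Nat.sInf_mem ⟨_, 1, M.one_mem, rfl⟩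
  have hmin : ∀ g ∈ M, r ≤ (Set.range g).ncard := fun g hg => Nat.sInf_le ⟨g, hg, rfl⟩
  rw [← hrank] at hmin ⊢
  have hrank_le_cliqueNum := (isClique_gr_range_of_ncard_range_le hf hmin).ncard_le_cliqueNum
  have hchromatic_le_rank := (colorable_gr_ncard_range hf).chromaticNumber_le
  have hcliqueNum_le_chromatic := (Gr M).cliqueNum_le_chromaticNumber
  have hcliqueNum : (Gr M).cliqueNum = (Set.range f).ncard :=
    le_antisymm (mod_cast hcliqueNum_le_chromatic.trans hchromatic_le_rank) hrank_le_cliqueNum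
  exact ⟨hcliqueNum, le_antisymm hchromatic_le_rank (hcliqueNum ▸ hcliqueNum_le_chromatic)⟩

theorem cliqueNum_Gr_eq_chromaticNumber_eq_min_rank (n : ℕ) (hn : 1 ≤ n)
    (M : Submonoid (Function.End (Fin n))) :
    (Gr M).cliqueNum = sInf {k : ℕ | ∃ f ∈ M, (Set.range f).ncard = k} ∧
    (Gr M).chromaticNumber = ((sInf {k : ℕ | ∃ f ∈ M, (Set.range f).ncard = k} : ℕ) : ℕ∞) :=
  cliqueNum_Gr_eq_chromaticNumber_eq_min_rank_general n M
end

section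
/- Let M be a transformation monoid on Fin n, and let f ∈ M be an element whose rank is minimal among elements of M. Then the range of f is a clique in the graph Gr(M). -/
open SimpleGraph

theorem Function.End.range_mul {α : Type*} (g f : Function.End α) :
    Set.range (g * f) = g '' Set.range f :=
  Set.range_comp g f

theorem Submonoid.injOn_range_of_rank_minimal {α : Type*} [Finite α]
    {M : Submonoid (Function.End α)} {f : Function.End α} (hf : f ∈ M)
    (hmin : ∀ g ∈ M, (Set.range f).ncard ≤ (Set.range g).ncard)
    {g : Function.End α} (hg : g ∈ M) : Set.InjOn g (Set.range f) := by
  have hle : (Set.range f).ncard ≤ (g '' Set.range f).ncard := by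
    simpa only [Function.End.range_mul] using hmin (g * f) (M.mul_mem hg hf)
  exact Set.injOn_of_ncard_image_eq
    (le_antisymm (Set.ncard_image_le (Set.toFinite _)) hle) (Set.toFinite _)

theorem range_of_min_rank_isClique (n : ℕ) (M : Submonoid (Function.End (Fin n)))
    (f : Function.End (Fin n)) (hf : f ∈ M)
    (hmin : ∀ g ∈ M, (Set.range f).ncard ≤ (Set.range g).ncard) :
    (Gr M).IsClique (Set.range f) := by
  rintro _ ⟨a, rfl⟩ _ ⟨b, rfl⟩ hne
  exact ⟨hne, fun g hg hgab =>
    hne (Submonoid.injOn_range_of_rank_minimal hf hmin hg ⟨a, rfl⟩ ⟨b, rfl⟩ hgab)⟩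
end

section
/- Let M be a transformation monoid on Fin n with n ≥ 1. Then Gr(M) is the graph with no edges (the bottom graph) if and only if M is synchronizing. -/
open SimpleGraph

namespace Submonoid

variable {α : Type*} [Finite α] {M : Submonoid (Function.End α)}

theorem exists_ncard_range_mul_lt (hM : ∀ v w, ∃ g ∈ M, g v = g w) {f : Function.End α}
    (hf : 1 < (Set.range f).ncard) : ∃ g ∈ M, (Set.range (g * f)).ncard < (Set.range f).ncard := by
  obtain ⟨x, y, hx, hy, hxy⟩ := (Set.one_lt_ncard_iff).mp hf
  obtain ⟨g, hgM, hg⟩ := hM x y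
  refine ⟨g, hgM, ?_⟩
  have hrange : Set.range (g * f) = g '' Set.range f := Set.range_comp g f
  rw [hrange]
  exact (Set.ncard_image_le).lt_of_ne fun h => hxy ((Set.ncard_image_iff).mp h hx hy hg)

/-- An element of minimal rank `r ≥ 2` could be composed with one identifying two points of its
range. -/
theorem exists_range_eq_singleton_of_forall_exists_apply_eq [Nonempty α] (hM : ∀ v w, ∃ g ∈ M, g v = g w) :
    ∃ f ∈ M, ∃ c, Set.range f = {c} := by
  obtain ⟨f, hfM, hmin⟩ :=
    exists_minimalFor_of_wellFoundedLT (· ∈ M) (fun f : Function.End α => (Set.range f).ncard)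
      ⟨1, M.one_mem⟩
  have hle : (Set.range f).ncard ≤ 1 := by
    by_contra! hf
    obtain ⟨g, hgM, hlt⟩ := exists_ncard_range_mul_lt hM hf
    exact hlt.not_ge (hmin (M.mul_mem hgM hfM) hlt.le)
  have hpos : 0 < (Set.range f).ncard := (Set.ncard_pos).mpr (Set.range_nonempty f)
  exact ⟨f, hfM, Set.ncard_eq_one.mp (by omega)⟩

end Submonoid

theorem Gr_eq_bot_iff {n : ℕ} {M : Submonoid (Function.End (Fin n))} :
    Gr M = ⊥ ↔ ∀ v w, ∃ f ∈ M, f v = f w := by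
  simp only [eq_bot_iff_forall_not_adj, Gr, not_and, not_forall, not_not, exists_prop]
  refine forall₂_congr fun v w => ⟨fun h => ?_, fun h _ => h⟩
  by_cases hvw : v = w
  · exact ⟨1, M.one_mem, congrArg _ hvw⟩
  · exact h hvw

theorem Gr_eq_bot_iff_synchronizing (n : ℕ) (hn : 1 ≤ n)
    (M : Submonoid (Function.End (Fin n))) :
    Gr M = ⊥ ↔ IsSynchronizing M := by
  have : Nonempty (Fin n) := ⟨⟨0, hn⟩⟩
  rw [Gr_eq_bot_iff]
  refine ⟨Submonoid.exists_range_eq_singleton_of_forall_exists_apply_eq, ?_⟩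
  rintro ⟨f, hfM, c, hc⟩ v w
  have hconst : ∀ x, f x = c := fun x => hc.subset (Set.mem_range_self x)
  exact ⟨f, hfM, (hconst v).trans (hconst w).symm⟩
end

section
/- Let M be a transformation monoid on Fin n. Then Gr(End(Gr(M))) = Gr(M). -/
open SimpleGraph

/-! `Gr` and `GraphEnd` form an antitone Galois connection between transformation monoids
and graphs on `Fin n`, and every such connection satisfies `Gr ∘ GraphEnd ∘ Gr = Gr`. -/

theorem Gr_antitone {n : ℕ} : Antitone (Gr (n := n)) :=
  fun _ _ hMN _ _ ⟨hne, h⟩ => ⟨hne, fun f hf => h f (hMN hf)⟩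

theorem le_Gr_graphEnd {n : ℕ} (X : SimpleGraph (Fin n)) : X ≤ Gr (GraphEnd X) :=
  fun _ _ hvw => ⟨hvw.ne, fun _ hf => (hf hvw).ne⟩

theorem le_graphEnd_Gr {n : ℕ} (M : Submonoid (Function.End (Fin n))) : M ≤ GraphEnd (Gr M) :=
  fun f hf _ _ ⟨_, h⟩ => ⟨h f hf, fun g hg => h (g * f) (M.mul_mem hg hf)⟩

theorem Gr_graphEnd_Gr (n : ℕ) (M : Submonoid (Function.End (Fin n))) :
    Gr (GraphEnd (Gr M)) = Gr M :=
  le_antisymm (Gr_antitone (le_graphEnd_Gr M)) (le_Gr_graphEnd (Gr M))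
end

section
/- For every simple graph X on Fin n, Hull(Hull(X)) = Hull(X), where Hull(X) = Gr(End(X)). In particular, a graph is the hull of some graph if and only if it equals its own hull. -/
open SimpleGraph

/-! Every monoid `M` consists of endomorphisms of `Gr M`: if `f ∈ M` identified the images of an
edge under some `g ∈ M`, then `g * f ∈ M` would identify its endpoints. Since also `X ≤ Gr (End X)`
and `Gr` is antitone, `Hull (Gr M) = Gr M` for every `M`, and the hulls are exactly the graphs
of monoids. -/

section

variable {n : ℕ}

theorem gr_anti {M N : Submonoid (Function.End (Fin n))} (h : M ≤ N) : Gr N ≤ Gr M :=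
  fun _ _ hvw => ⟨hvw.1, fun f hf => hvw.2 f (h hf)⟩

theorem le_hull (X : SimpleGraph (Fin n)) : X ≤ Hull X :=
  fun _ _ hvw => ⟨hvw.ne, fun _ hf => (hf hvw).ne⟩

theorem le_graphEnd_gr (M : Submonoid (Function.End (Fin n))) : M ≤ GraphEnd (Gr M) :=
  fun f hf _ _ hab => ⟨hab.2 f hf, fun g hg => hab.2 (g * f) (mul_mem hg hf)⟩

theorem hull_gr (M : Submonoid (Function.End (Fin n))) : Hull (Gr M) = Gr M :=
  le_antisymm (gr_anti (le_graphEnd_gr M)) (le_hull _)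

end

theorem hull_idempotent (n : ℕ) (X : SimpleGraph (Fin n)) :
    Hull (Hull X) = Hull X ∧ ((∃ Y : SimpleGraph (Fin n), X = Hull Y) ↔ Hull X = X) :=
  ⟨hull_gr _, ⟨fun ⟨_, hY⟩ => hY ▸ hull_gr _, fun h => ⟨X, h.symm⟩⟩⟩
end

section
/- Let X be a simple graph on Fin n with clique number m, and let X' be the derived graph of X: the spanning subgraph of X whose edges are exactly those edges of X that are contained in some clique of X of cardinality m. Then every endomorphism of X is an endomorphism of X', i.e., End(X) ≤ End(X'). -/
open SimpleGraph

namespace SimpleGraph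

variable {V W : Type*} {G : SimpleGraph V} {H : SimpleGraph W}

theorem IsClique.injOn_hom (φ : G →g H) {s : Set V} (hs : G.IsClique s) : Set.InjOn φ s := by
  intro a ha b hb hab
  by_contra hne
  exact (φ.map_adj (hs ha hb hne)).ne hab

theorem IsClique.image_hom (φ : G →g H) {s : Set V} (hs : G.IsClique s) :
    H.IsClique (φ '' s) := by
  rintro _ ⟨a, ha, rfl⟩ _ ⟨b, hb, rfl⟩ hne
  exact φ.map_adj (hs ha hb fun hab => hne (congrArg φ hab))

theorem IsNClique.image_hom [DecidableEq W] (φ : G →g H) {k : ℕ} {s : Finset V}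
    (hs : G.IsNClique k s) : H.IsNClique k (s.image φ) where
  isClique := by
    rw [Finset.coe_image]
    exact hs.isClique.image_hom φ
  card_eq := by
    rw [Finset.card_image_of_injOn (hs.isClique.injOn_hom φ), hs.card_eq]

end SimpleGraph

theorem graphEnd_le_graphEnd_derived_general (n : ℕ) (X : SimpleGraph (Fin n)) :
    GraphEnd X ≤ GraphEnd (derivedGraph X) := by
  rintro f hf v w ⟨hadj, s, hs, hv, hw⟩
  let φ : X →g X := ⟨f, fun h => hf h⟩
  exact ⟨hf hadj, s.image f, hs.image_hom φ, Finset.mem_image_of_mem f hv,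
    Finset.mem_image_of_mem f hw⟩

theorem graphEnd_le_graphEnd_derived (n : ℕ) (X : SimpleGraph (Fin n)) (m : ℕ)
    (hm : X.cliqueNum = m) : GraphEnd X ≤ GraphEnd (derivedGraph X) :=
  graphEnd_le_graphEnd_derived_general n X
end

section
/- Let X be a simple graph on Fin n which has at least one edge, satisfies Hull(X) = X, and in which every edge is contained in a clique of size ω(X). Then End(X) is a maximal non-synchronizing submonoid of Function.End (Fin n): End(X) is not synchronizing, and every submonoid of Function.End (Fin n) strictly containing End(X) is synchronizing. -/
open SimpleGraph

/-!
A transformation monoid `M` is synchronizing iff `Gr M` has no edges: the range of an element of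
minimal rank is a clique of `Gr M`, since no element of `M` can identify two of its points.
As `Gr (End X) = Hull X = X` has an edge, `End X` is not synchronizing. If `N ⊋ End X`, some
`g ∈ N` maps an edge to a non-edge, and an endomorphism merging that non-edge turns `g` into an
element of `N` collapsing an edge `vw`, which lies in a maximum clique `S`. A minimal-rank
endomorphism retracts `X` onto a maximum clique, and relabelling that clique onto `S` sends any
edge `ab` onto `vw`; so `N` collapses every edge, while `End X` already collapses every
non-edge. Hence `Gr N` has no edges.
-/

section Gr

variable {n : ℕ} {M : Submonoid (Function.End (Fin n))}

theorem not_gr_adj_iff {v w : Fin n} : ¬ (Gr M).Adj v w ↔ ∃ f ∈ M, f v = f w := by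
  refine ⟨fun h => ?_, fun ⟨f, hf, hfvw⟩ hadj => hadj.2 f hf hfvw⟩
  by_cases hvw : v = w
  · exact ⟨1, M.one_mem, congrArg _ hvw⟩
  · simpa [Gr, hvw] using h

theorem gr_antitone : Antitone (Gr (n := n)) :=
  fun _ _ hMN _ _ hvw => ⟨hvw.1, fun f hf => hvw.2 f (hMN hf)⟩

theorem gr_eq_bot_iff : Gr M = ⊥ ↔ ∀ v w, ∃ f ∈ M, f v = f w := by
  simp only [eq_bot_iff_forall_not_adj, not_gr_adj_iff]

theorem exists_mem_isClique_gr_range (M : Submonoid (Function.End (Fin n))) :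
    ∃ f ∈ M, (Gr M).IsClique (Set.range f) := by
  obtain ⟨f, hfM, hmin⟩ := Set.exists_min_image (M : Set (Function.End (Fin n)))
    (fun f => (Set.range f).ncard) (Set.toFinite (α := Fin n → Fin n) _) ⟨1, M.one_mem⟩
  refine ⟨f, hfM, fun a ha b hb hab => ⟨hab, fun g hg hgab => hab ?_⟩⟩
  have hrank : (Set.range f).ncard ≤ (g '' Set.range f).ncard :=
    (hmin (g * f) (mul_mem hg hfM)).trans_eq (congrArg Set.ncard (Set.range_comp g f))
  exact Set.injOn_of_ncard_image_eq (le_antisymm (Set.ncard_image_le) hrank) (Set.toFinite _)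
    ha hb hgab

theorem isSynchronizing_iff_gr_eq_bot [Nonempty (Fin n)] : IsSynchronizing M ↔ Gr M = ⊥ := by
  constructor
  · rintro ⟨f, hf, c, hc⟩
    have hconst : ∀ v, f v = c := fun v => hc.subset (Set.mem_range_self v)
    exact gr_eq_bot_iff.2 fun v w => ⟨f, hf, (hconst v).trans (hconst w).symm⟩
  · intro h
    obtain ⟨f, hf, hclique⟩ := exists_mem_isClique_gr_range M
    rw [h, isClique_bot_iff] at hclique
    obtain ⟨v⟩ := ‹Nonempty (Fin n)›
    exact ⟨f, hf, f v, hclique.eq_singleton_of_mem (Set.mem_range_self v)⟩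

end Gr

section GraphEnd

variable {n : ℕ} {X : SimpleGraph (Fin n)}

theorem gr_le_of_graphEnd_le (hhull : Hull X = X) {N : Submonoid (Function.End (Fin n))}
    (hN : GraphEnd X ≤ N) : Gr N ≤ X :=
  hhull ▸ gr_antitone hN

theorem cliqueNum_le_card_image_univ {f : Function.End (Fin n)} (hf : f ∈ GraphEnd X) :
    X.cliqueNum ≤ (Finset.univ.image f).card := by
  obtain ⟨C, hC⟩ := X.exists_isNClique_cliqueNum
  have hinj : Set.InjOn f C := fun a ha b hb hfab => by
    by_contra hab
    exact (hf (hC.isClique ha hb hab)).ne hfab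
  calc X.cliqueNum = (C.image f).card := by rw [Finset.card_image_of_injOn hinj, hC.card_eq]
    _ ≤ (Finset.univ.image f).card :=
      Finset.card_le_card (Finset.image_subset_image C.subset_univ)

theorem exists_mem_graphEnd_isNClique_image_univ (hhull : Hull X = X) :
    ∃ f ∈ GraphEnd X, X.IsNClique X.cliqueNum (Finset.univ.image f) := by
  obtain ⟨f, hf, hclique⟩ := exists_mem_isClique_gr_range (GraphEnd X)
  rw [← Hull, hhull] at hclique
  have hclique' : X.IsClique (Finset.univ.image f : Set (Fin n)) := by
    rwa [Fintype.coe_image_univ (f := (f : Fin n → Fin n))]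
  exact ⟨f, hf, hclique',
    le_antisymm hclique'.card_le_cliqueNum (cliqueNum_le_card_image_univ hf)⟩

theorem Finset.exists_equiv_apply_eq_apply_eq {α : Type*} {T S : Finset α}
    (hTS : T.card = S.card) {x y v w : α} (hx : x ∈ T) (hy : y ∈ T) (hxy : x ≠ y)
    (hv : v ∈ S) (hw : w ∈ S) (hvw : v ≠ w) :
    ∃ g : T ≃ S, (g ⟨x, hx⟩ : α) = v ∧ (g ⟨y, hy⟩ : α) = w := by
  classical
  obtain ⟨g, hg⟩ := Set.MapsTo.exists_equiv_extend_of_card_eq (by simpa using hTS)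
    (s := {⟨x, hx⟩, ⟨y, hy⟩}) (f := fun z : T => if (z : α) = x then v else w)
    (by rintro z (rfl | rfl) <;> simp [hxy.symm, hv, hw])
    (by rintro z (rfl | rfl) z' (rfl | rfl) <;> simp [hxy.symm, hvw, hvw.symm])
  exact ⟨g, by simpa using hg ⟨x, hx⟩, by simpa [hxy.symm] using hg ⟨y, hy⟩⟩

theorem exists_mem_graphEnd_apply_eq_apply_eq (hhull : Hull X = X) {S : Finset (Fin n)}
    (hS : X.IsNClique X.cliqueNum S) {a b v w : Fin n} (hab : X.Adj a b)
    (hv : v ∈ S) (hw : w ∈ S) (hvw : v ≠ w) :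
    ∃ e ∈ GraphEnd X, e a = v ∧ e b = w := by
  obtain ⟨f, hf, hT⟩ := exists_mem_graphEnd_isNClique_image_univ hhull
  have hmem : ∀ x, f x ∈ Finset.univ.image f := fun x =>
    Finset.mem_image_of_mem f (Finset.mem_univ x)
  obtain ⟨g, hga, hgb⟩ :=
    Finset.exists_equiv_apply_eq_apply_eq (hT.card_eq.trans hS.card_eq.symm) (hmem a)
      (hmem b) (hf hab).ne hv hw hvw
  refine ⟨fun x => g ⟨f x, hmem x⟩, fun x y hxy => ?_, hga, hgb⟩
  have hne : g ⟨f x, hmem x⟩ ≠ g ⟨f y, hmem y⟩ :=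
    g.injective.ne fun h => (hf hxy).ne (congrArg Subtype.val h)
  exact hS.isClique (g _).2 (g _).2 (Subtype.val_injective.ne hne)

theorem exists_mem_apply_eq_of_graphEnd_lt (hhull : Hull X = X)
    {N : Submonoid (Function.End (Fin n))} (hN : GraphEnd X < N) :
    ∃ h ∈ N, ∃ v w, X.Adj v w ∧ h v = h w := by
  obtain ⟨g, hgN, hgX⟩ := SetLike.exists_of_lt hN
  obtain ⟨v, w, hvw, hgvw⟩ : ∃ v w, X.Adj v w ∧ ¬ X.Adj (g v) (g w) := by
    by_contra! h
    exact hgX h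
  obtain ⟨m, hm, hmg⟩ := not_gr_adj_iff.1 fun h => hgvw (gr_le_of_graphEnd_le hhull hN.le h)
  exact ⟨m * g, mul_mem hm hgN, v, w, hvw, hmg⟩

end GraphEnd

theorem hull_graph_end_maximal_non_synchronizing (n : ℕ) (X : SimpleGraph (Fin n))
    (hedge : ∃ v w : Fin n, X.Adj v w)
    (hhull : Hull X = X)
    (hcl : ∀ v w : Fin n, X.Adj v w →
      ∃ s : Finset (Fin n), X.IsNClique X.cliqueNum s ∧ v ∈ s ∧ w ∈ s) :
    ¬ IsSynchronizing (GraphEnd X) ∧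
      ∀ N : Submonoid (Function.End (Fin n)), GraphEnd X < N → IsSynchronizing N := by
  obtain ⟨v₀, w₀, hvw₀⟩ := hedge
  have : Nonempty (Fin n) := ⟨v₀⟩
  refine ⟨fun hsync => ?_, fun N hN => ?_⟩
  · rw [isSynchronizing_iff_gr_eq_bot, ← Hull, hhull] at hsync
    exact eq_bot_iff_forall_not_adj.1 hsync v₀ w₀ hvw₀
  · obtain ⟨h, hh, v, w, hvw, hhvw⟩ := exists_mem_apply_eq_of_graphEnd_lt hhull hN
    obtain ⟨S, hS, hv, hw⟩ := hcl v w hvw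
    refine isSynchronizing_iff_gr_eq_bot.2 (gr_eq_bot_iff.2 fun a b => ?_)
    by_cases hab : X.Adj a b
    · obtain ⟨e, he, rfl, rfl⟩ :=
        exists_mem_graphEnd_apply_eq_apply_eq hhull hS hab hv hw hvw.ne
      exact ⟨h * e, mul_mem hh (hN.le he), hhvw⟩
    · exact not_gr_adj_iff.1 fun hadj => hab (gr_le_of_graphEnd_le hhull hN.le hadj)
end

section
/- Let X be a simple graph on Fin n with χ(X) = ω(X) in which every edge is contained in a clique of size ω(X). Then End(X) acts transitively on ordered edges: for any two edges {v, w} and {v', w'} of X there exists an endomorphism h of X with h v = v' and h w = w'. -/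
open SimpleGraph

/-! A proper `ω(X)`-colouring is a homomorphism from `X` onto the complete graph on the colours,
and a maximum clique is a copy of that complete graph inside `X`. Composing the colouring with a
bijection from the colours onto a maximum clique through `v', w'` that sends the colours of `v, w`
to `v', w'` gives the required endomorphism. -/

theorem Equiv.exists_apply_eq_and_apply_eq {α β : Type*} [DecidableEq β] (e : α ≃ β)
    {a b : α} {c d : β} (hab : a ≠ b) (hcd : c ≠ d) : ∃ e' : α ≃ β, e' a = c ∧ e' b = d := by
  set e₁ := e.trans (swap (e a) c)
  have he₁a : e₁ a = c := by simp [e₁]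
  have he₁b : e₁ b ≠ c := he₁a ▸ e₁.injective.ne hab.symm
  refine ⟨e₁.trans (swap (e₁ b) d), ?_, by simp⟩
  simp [he₁a, swap_apply_of_ne_of_ne he₁b.symm hcd]

namespace SimpleGraph

variable {V α : Type*} {X : SimpleGraph V}

def Coloring.toClique (C : X.Coloring α) {s : Set V} (hs : X.IsClique s) (e : α ↪ s) :
    X →g X where
  toFun x := e (C x)
  map_rel' hxy := hs (e _).2 (e _).2 (Subtype.val_injective.ne (e.injective.ne (C.valid hxy)))

theorem Coloring.exists_hom_apply_eq_and_apply_eq [Fintype α] (C : X.Coloring α) {s : Finset V}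
    (hs : X.IsNClique (Fintype.card α) s) {v w v' w' : V} (hvw : X.Adj v w) (hv' : v' ∈ s)
    (hw' : w' ∈ s) (hne : v' ≠ w') : ∃ f : X →g X, f v = v' ∧ f w = w' := by
  classical
  have e₀ : α ≃ s := Fintype.equivOfCardEq (by simp [hs.card_eq])
  obtain ⟨e, hev, hew⟩ := e₀.exists_apply_eq_and_apply_eq (c := ⟨v', hv'⟩) (d := ⟨w', hw'⟩)
    (C.valid hvw) (by simpa using hne)
  exact ⟨C.toClique hs.isClique e.toEmbedding, congrArg Subtype.val hev, congrArg Subtype.val hew⟩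

end SimpleGraph

theorem end_transitive_on_edges (n : ℕ) (X : SimpleGraph (Fin n))
    (hchrom : X.chromaticNumber = (X.cliqueNum : ℕ∞))
    (hcl : ∀ v w : Fin n, X.Adj v w →
      ∃ s : Finset (Fin n), X.IsNClique X.cliqueNum s ∧ v ∈ s ∧ w ∈ s) :
    ∀ v w v' w' : Fin n, X.Adj v w → X.Adj v' w' →
      ∃ h ∈ GraphEnd X, h v = v' ∧ h w = w' := by
  intro v w v' w' hvw hv'w'
  obtain ⟨C⟩ : X.Colorable X.cliqueNum := chromaticNumber_le_iff_colorable.mp hchrom.le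
  obtain ⟨s, hs, hv', hw'⟩ := hcl v' w' hv'w'
  obtain ⟨f, hfv, hfw⟩ :=
    C.exists_hom_apply_eq_and_apply_eq (by rwa [Fintype.card_fin]) hvw hv' hw' hv'w'.ne
  exact ⟨⇑f, fun _ _ hab => f.map_adj hab, hfv, hfw⟩
end

section
/- Let n > 2 and let S be a set of functions Fin n → Fin n whose generated submonoid is all of Function.End (Fin n). Then S contains at least one function that is not a bijection and at least two distinct functions that are bijections. In particular, the full transformation monoid on Fin n cannot be generated by fewer than three elements. -/
open SimpleGraph

/-!
A submonoid of a Dedekind-finite monoid (for instance a finite one) generated by `S` can only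
reach a unit through products of units of `S`, since `x * y` is a unit only if `x` and `y` are.
In `Function.End (Fin n)` the units are the bijections, so a generating set must contain a
non-bijection (to reach a constant map), and its bijections must generate the symmetric group.
One bijection generates a commutative monoid, but the transpositions `(0 1)` and `(1 2)` do not
commute.
-/

namespace Submonoid

variable {M : Type*} [Monoid M] {S : Set M} {x y : M}

theorem exists_not_isUnit_of_mem_closure (hx : x ∈ closure S) (hxu : ¬IsUnit x) :
    ∃ s ∈ S, ¬IsUnit s := by
  by_contra! h
  exact hxu (closure_le (S := IsUnit.submonoid M) |>.mpr h hx)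

theorem mem_closure_isUnit_of_mem_closure [IsDedekindFiniteMonoid M] (hx : x ∈ closure S)
    (hxu : IsUnit x) : x ∈ closure {s ∈ S | IsUnit s} := by
  induction hx using closure_induction with
  | mem y hy => exact subset_closure ⟨hy, hxu⟩
  | one => exact one_mem _
  | mul a b _ _ iha ihb =>
    exact mul_mem (iha (isUnit_of_mul_isUnit_left hxu)) (ihb (isUnit_of_mul_isUnit_right hxu))

theorem exists_ne_isUnit_of_not_commute [IsDedekindFiniteMonoid M] (hx : x ∈ closure S)
    (hy : y ∈ closure S) (hxu : IsUnit x) (hyu : IsUnit y) (hxy : ¬Commute x y) :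
    ∃ s ∈ S, ∃ t ∈ S, s ≠ t ∧ IsUnit s ∧ IsUnit t := by
  by_contra! h
  have hcomm : ∀ a ∈ {s ∈ S | IsUnit s}, ∀ b ∈ {s ∈ S | IsUnit s}, a * b = b * a := by
    intro a ha b hb
    by_cases hab : a = b
    · rw [hab]
    · exact absurd hb.2 (h a ha.1 b hb.1 hab ha.2)
  exact hxy <| congrArg Subtype.val <| (isMulCommutative_closure _ hcomm).is_comm.comm
    (⟨x, mem_closure_isUnit_of_mem_closure hx hxu⟩ : closure {s ∈ S | IsUnit s})
    ⟨y, mem_closure_isUnit_of_mem_closure hy hyu⟩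

end Submonoid

namespace Function.End

variable {α : Type*}

instance [Finite α] : Finite (Function.End α) := inferInstanceAs (Finite (α → α))

theorem isUnit_iff_bijective {f : Function.End α} : IsUnit f ↔ Bijective f := by
  refine ⟨?_, fun hf => ⟨Equiv.Perm.equivUnitsEnd (Equiv.ofBijective f hf), rfl⟩⟩
  rintro ⟨u, rfl⟩
  exact (Equiv.Perm.equivUnitsEnd.symm u).bijective

theorem not_commute_swap_swap [DecidableEq α] {a b c : α} (hab : a ≠ b) (hac : a ≠ c)
    (hbc : b ≠ c) :
    ¬Commute (Equiv.Perm.equivUnitsEnd (Equiv.swap a b) : Function.End α)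
      (Equiv.Perm.equivUnitsEnd (Equiv.swap b c)) := by
  intro h
  have := congr_fun h.eq a
  change Equiv.swap a b (Equiv.swap b c a) = Equiv.swap b c (Equiv.swap a b a) at this
  rw [Equiv.swap_apply_of_ne_of_ne hab hac, Equiv.swap_apply_left, Equiv.swap_apply_left] at this
  exact hbc this

theorem exists_not_bijective_of_closure_eq_top [Nontrivial α] {S : Set (Function.End α)}
    (hS : Submonoid.closure S = ⊤) : ∃ f ∈ S, ¬Bijective f := by
  obtain ⟨f, hf⟩ : ∃ f : Function.End α, ¬IsUnit f :=
    ⟨fun _ => Classical.arbitrary α, fun h => not_injective_const (isUnit_iff_bijective.mp h).injective⟩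
  simpa only [isUnit_iff_bijective] using
    Submonoid.exists_not_isUnit_of_mem_closure (hS ▸ Submonoid.mem_top f) hf

theorem exists_ne_bijective_of_closure_eq_top [Finite α] {a b c : α} (hab : a ≠ b)
    (hac : a ≠ c) (hbc : b ≠ c) {S : Set (Function.End α)} (hS : Submonoid.closure S = ⊤) :
    ∃ g ∈ S, ∃ h ∈ S, g ≠ h ∧ Bijective g ∧ Bijective h := by
  classical
  simpa only [isUnit_iff_bijective] using
    Submonoid.exists_ne_isUnit_of_not_commute (hS ▸ Submonoid.mem_top _)
      (hS ▸ Submonoid.mem_top _) (Units.isUnit _) (Units.isUnit _)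
      (not_commute_swap_swap hab hac hbc)

end Function.End

theorem generating_set_of_full_transformation_monoid (n : ℕ) (hn : 2 < n)
    (S : Set (Function.End (Fin n))) (hS : Submonoid.closure S = ⊤) :
    (∃ f ∈ S, ¬ Function.Bijective f) ∧
    (∃ g ∈ S, ∃ h ∈ S, g ≠ h ∧ Function.Bijective g ∧ Function.Bijective h) ∧
    3 ≤ S.ncard := by
  obtain ⟨a, b, c, hab, hac, hbc⟩ := Fintype.two_lt_card_iff.mp (by rwa [Fintype.card_fin])
  have := nontrivial_of_ne a b hab
  obtain ⟨f, hfS, hf⟩ := Function.End.exists_not_bijective_of_closure_eq_top hS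
  obtain ⟨g, hgS, h, hhS, hgh, hg, hh⟩ :=
    Function.End.exists_ne_bijective_of_closure_eq_top hab hac hbc hS
  refine ⟨⟨f, hfS, hf⟩, ⟨g, hgS, h, hhS, hgh, hg, hh⟩, (Set.two_lt_ncard).mpr ?_⟩
  exact ⟨f, hfS, g, hgS, h, hhS, fun e => hf (e ▸ hg), fun e => hf (e ▸ hh), hgh⟩
end

section
/- For each k ≥ 1 let c_k denote the number of ordered pairs (g, h) of permutations of Fin k such that the subgroup of the symmetric group on Fin k generated by {g, h} acts transitively on Fin k. Then for every n ≥ 1, ∑_{k=1}^{n} C(n-1, k-1) · c_k · ((n-k)!)² = (n!)². -/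
open SimpleGraph

/-- `transPairsCard k` is the number of ordered pairs of permutations of `Fin k`
generating a transitive subgroup of the symmetric group. -/
noncomputable def transPairsCard (k : ℕ) : ℕ :=
  Nat.card {p : Equiv.Perm (Fin k) × Equiv.Perm (Fin k) //
    ∀ x y : Fin k, ∃ g ∈ Subgroup.closure {p.1, p.2}, g x = y}

/-! Count all pairs `(g, h)` of permutations of an `n`-element set by the orbit `S` of a fixed
point `z` under `⟨g, h⟩`. Both `g` and `h` preserve `S`, so the pair splits into a pair on `S`,
which must generate a transitive group, and an arbitrary pair on the complement of `S`: the fibre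
over `S` has `c_|S| · ((n - |S|)!)²` elements, and `C(n - 1, k - 1)` of the sets `S` of size `k`
contain `z`. -/

open Equiv Finset

theorem Subgroup.exists_mem_closure_pair_map_iff {G H F : Type*} [Group G] [Group H]
    [FunLike F G H] [MonoidHomClass F G H] (f : F) (a b : G) (P : H → Prop) :
    (∃ h ∈ Subgroup.closure {f a, f b}, P h) ↔ ∃ g ∈ Subgroup.closure {a, b}, P (f g) := by
  rw [← MonoidHom.coe_coe f, ← Set.image_pair, ← MonoidHom.map_closure]
  simp only [Subgroup.mem_map, exists_exists_and_eq_and, MonoidHom.coe_coe]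

theorem Finset.sum_range_eq_sum_Icc_one {M : Type*} [AddCommMonoid M] (f : ℕ → M) (n : ℕ) :
    ∑ m ∈ range n, f (m + 1) = ∑ k ∈ Icc 1 n, f k := by
  rw [range_eq_Ico, sum_Ico_add', zero_add, Ico_add_one_right_eq_Icc]

theorem Finset.sum_powerset_ite_mem {α M : Type*} [Fintype α] [DecidableEq α] [AddCommMonoid M]
    (f : ℕ → M) (z : α) :
    ∑ S ∈ (univ : Finset α).powerset, (if z ∈ S then f #S else 0) =
      ∑ k ∈ Icc 1 (Fintype.card α), (Fintype.card α - 1).choose (k - 1) • f k := by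
  have hz : z ∉ univ.erase z := notMem_erase z univ
  have hT {T : Finset α} (hT : T ∈ (univ.erase z).powerset) : z ∉ T :=
    fun h => hz (mem_powerset.1 hT h)
  rw [← insert_erase (mem_univ z), sum_powerset_insert hz,
    sum_eq_zero fun T hT' => if_neg (hT hT'), zero_add,
    sum_congr rfl fun T hT' => by rw [if_pos (mem_insert_self z T), card_insert_of_notMem (hT hT')],
    sum_powerset_apply_card (fun m => f (m + 1)), card_erase_of_mem (mem_univ z), card_univ,
    Nat.sub_add_cancel (Fintype.card_pos_iff.2 ⟨z⟩), ← sum_range_eq_sum_Icc_one]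
  simp

namespace Equiv.Perm

variable {α β : Type*}

theorem subtypeCongr_subtypePerm {p : α → Prop} [DecidablePred p] (f : Perm α)
    (h : ∀ x, p (f x) ↔ p x) :
    (f.subtypePerm h).subtypeCongr (f.subtypePerm fun x => not_congr (h x)) = f := by
  ext x
  by_cases hx : p x <;> simp [hx]

def IsTransitivePair (p : Perm α × Perm α) : Prop :=
  ∀ x y : α, ∃ g ∈ Subgroup.closure {p.1, p.2}, g x = y

theorem isTransitivePair_iff_forall_exists (p : Perm α × Perm α) (z : α) :
    IsTransitivePair p ↔ ∀ y, ∃ g ∈ Subgroup.closure {p.1, p.2}, g z = y := by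
  refine ⟨fun h => h z, fun h x y => ?_⟩
  obtain ⟨g, hg, rfl⟩ := h x
  obtain ⟨g', hg', rfl⟩ := h y
  exact ⟨g' * g⁻¹, mul_mem hg' (inv_mem hg), by simp⟩

theorem isTransitivePair_permCongrHom_iff (e : α ≃ β) (p : Perm α × Perm α) :
    IsTransitivePair (e.permCongrHom p.1, e.permCongrHom p.2) ↔ IsTransitivePair p := by
  simp only [IsTransitivePair, Subgroup.exists_mem_closure_pair_map_iff, e.surjective.forall]
  simp [Equiv.permCongrHom]

theorem natCard_isTransitivePair_congr (e : α ≃ β) :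
    Nat.card {p : Perm α × Perm α // IsTransitivePair p} =
      Nat.card {p : Perm β × Perm β // IsTransitivePair p} :=
  Nat.card_congr <| (e.permCongrHom.toEquiv.prodCongr e.permCongrHom.toEquiv).subtypeEquiv
    fun p => (isTransitivePair_permCongrHom_iff e p).symm

theorem transPairsCard_fintypeCard [Fintype α] :
    transPairsCard (Fintype.card α) = Nat.card {p : Perm α × Perm α // IsTransitivePair p} :=
  (natCard_isTransitivePair_congr (Fintype.equivFin α)).symm

section Orbit

variable [Fintype α]

open scoped Classical in
noncomputable def pairOrbit (p : Perm α × Perm α) (z : α) : Finset α :=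
  {x | ∃ g ∈ Subgroup.closure {p.1, p.2}, g z = x}

variable {p : Perm α × Perm α} {z x : α}

theorem mem_pairOrbit : x ∈ pairOrbit p z ↔ ∃ g ∈ Subgroup.closure {p.1, p.2}, g z = x := by
  simp [pairOrbit]

theorem self_mem_pairOrbit : z ∈ pairOrbit p z :=
  mem_pairOrbit.2 ⟨1, one_mem _, rfl⟩

theorem apply_mem_pairOrbit_iff {g : Perm α} (hg : g ∈ Subgroup.closure {p.1, p.2}) :
    g x ∈ pairOrbit p z ↔ x ∈ pairOrbit p z := by
  simp only [mem_pairOrbit]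
  constructor
  · rintro ⟨u, hu, hux⟩
    exact ⟨g⁻¹ * u, mul_mem (inv_mem hg) hu, by simp [hux]⟩
  · rintro ⟨u, hu, rfl⟩
    exact ⟨g * u, mul_mem hg hu, rfl⟩

variable [DecidableEq α] {S : Finset α}

theorem mem_pairOrbit_subtypeCongrHom (hz : z ∈ S) (a : Perm S × Perm S)
    (b : Perm {x // x ∉ S} × Perm {x // x ∉ S}) :
    x ∈ pairOrbit (subtypeCongrHom (· ∈ S) (a.1, b.1), subtypeCongrHom (· ∈ S) (a.2, b.2)) z ↔
      ∃ u ∈ Subgroup.closure {a.1, a.2}, (u ⟨z, hz⟩ : α) = x := by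
  rw [mem_pairOrbit, Subgroup.exists_mem_closure_pair_map_iff]
  simp only [subtypeCongrHom_apply, subtypeCongr.left_apply _ _ hz]
  exact Subgroup.exists_mem_closure_pair_map_iff (MonoidHom.fst _ _) (a.1, b.1) (a.2, b.2)
    (fun u => (u ⟨z, hz⟩ : α) = x) |>.symm

theorem pairOrbit_subtypeCongrHom_eq_iff (hz : z ∈ S) (a : Perm S × Perm S)
    (b : Perm {x // x ∉ S} × Perm {x // x ∉ S}) :
    pairOrbit (subtypeCongrHom (· ∈ S) (a.1, b.1), subtypeCongrHom (· ∈ S) (a.2, b.2)) z = S ↔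
      IsTransitivePair a := by
  rw [isTransitivePair_iff_forall_exists a ⟨z, hz⟩, Finset.ext_iff]
  simp only [mem_pairOrbit_subtypeCongrHom hz]
  constructor
  · intro h y
    obtain ⟨u, hu, hy⟩ := (h y).2 y.2
    exact ⟨u, hu, Subtype.ext hy⟩
  · intro h x
    constructor
    · rintro ⟨u, -, rfl⟩
      exact (u _).2
    · intro hx
      obtain ⟨u, hu, hux⟩ := h ⟨x, hx⟩
      exact ⟨u, hu, congrArg Subtype.val hux⟩

theorem exists_subtypeCongrHom_eq_of_pairOrbit_eq (h : pairOrbit p z = S) :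
    ∃ (a : Perm S × Perm S) (b : Perm {x // x ∉ S} × Perm {x // x ∉ S}),
      (subtypeCongrHom (· ∈ S) (a.1, b.1), subtypeCongrHom (· ∈ S) (a.2, b.2)) = p := by
  have hS {q : Perm α} (hq : q ∈ Subgroup.closure {p.1, p.2}) (x : α) : q x ∈ S ↔ x ∈ S :=
    h ▸ apply_mem_pairOrbit_iff hq
  have h₁ := hS (Subgroup.subset_closure (Set.mem_insert _ _))
  have h₂ := hS (Subgroup.subset_closure (Set.mem_insert_of_mem _ rfl))
  exact ⟨(p.1.subtypePerm h₁, p.2.subtypePerm h₂),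
    (p.1.subtypePerm fun x => not_congr (h₁ x), p.2.subtypePerm fun x => not_congr (h₂ x)),
    Prod.ext (subtypeCongr_subtypePerm _ h₁) (subtypeCongr_subtypePerm _ h₂)⟩

noncomputable def pairOrbitFiberEquiv (hz : z ∈ S) :
    {a : Perm S × Perm S // IsTransitivePair a} × (Perm {x // x ∉ S} × Perm {x // x ∉ S}) ≃
      {p : Perm α × Perm α // pairOrbit p z = S} :=
  Equiv.ofBijective
    (fun w => ⟨(subtypeCongrHom (· ∈ S) (w.1.1.1, w.2.1),
        subtypeCongrHom (· ∈ S) (w.1.1.2, w.2.2)),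
      (pairOrbit_subtypeCongrHom_eq_iff hz _ _).2 w.1.2⟩)
    ⟨fun w w' h => by
      obtain ⟨h₁, h₂⟩ := Prod.ext_iff.1 (Subtype.ext_iff.1 h)
      obtain ⟨ha₁, hb₁⟩ := Prod.ext_iff.1 (subtypeCongrHom_injective _ h₁)
      obtain ⟨ha₂, hb₂⟩ := Prod.ext_iff.1 (subtypeCongrHom_injective _ h₂)
      exact Prod.ext (Subtype.ext (Prod.ext ha₁ ha₂)) (Prod.ext hb₁ hb₂),
    fun ⟨p, hp⟩ => by
      obtain ⟨a, b, rfl⟩ := exists_subtypeCongrHom_eq_of_pairOrbit_eq hp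
      exact ⟨(⟨a, (pairOrbit_subtypeCongrHom_eq_iff hz a b).1 hp⟩, b), rfl⟩⟩

theorem card_pairOrbit_eq (hz : z ∈ S) :
    #{p : Perm α × Perm α | pairOrbit p z = S} =
      transPairsCard #S * (Fintype.card α - #S).factorial ^ 2 := by
  rw [← Fintype.card_subtype, ← Nat.card_eq_fintype_card,
    ← Nat.card_congr (pairOrbitFiberEquiv hz), Nat.card_prod, ← transPairsCard_fintypeCard,
    Fintype.card_coe, Nat.card_prod, Nat.card_perm, sq, Nat.card_eq_fintype_card,
    Fintype.card_subtype_compl, Fintype.card_coe]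

end Orbit

theorem sum_choose_smul_transPairsCard [Fintype α] [DecidableEq α] (z : α) :
    ∑ k ∈ Icc 1 (Fintype.card α), (Fintype.card α - 1).choose (k - 1) •
        (transPairsCard k * (Fintype.card α - k).factorial ^ 2) =
      (Fintype.card α).factorial ^ 2 := by
  have hfiber : ∀ S ∈ (univ : Finset α).powerset, #{p : Perm α × Perm α | pairOrbit p z = S} =
      if z ∈ S then transPairsCard #S * (Fintype.card α - #S).factorial ^ 2 else 0 := by
    intro S _
    split_ifs with hz
    · exact card_pairOrbit_eq hz
    · exact card_eq_zero.2 (filter_eq_empty_iff.2 fun p _ hp => hz (hp ▸ self_mem_pairOrbit))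
  rw [← sum_powerset_ite_mem (fun k => transPairsCard k * (Fintype.card α - k).factorial ^ 2) z,
    ← sum_congr rfl hfiber,
    ← card_eq_sum_card_fiberwise fun p _ => mem_powerset.2 (subset_univ (pairOrbit p z)),
    card_univ, Fintype.card_prod, Fintype.card_perm, sq]

end Equiv.Perm

theorem transitive_pairs_recurrence (n : ℕ) (hn : 1 ≤ n) :
    ∑ k ∈ Finset.Icc 1 n,
        Nat.choose (n - 1) (k - 1) * transPairsCard k * ((n - k).factorial) ^ 2
      = (n.factorial) ^ 2 := by
  simpa [mul_assoc] using Equiv.Perm.sum_choose_smul_transPairsCard (⟨0, hn⟩ : Fin n)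
end

section
/- Let n ≥ 2. The number of ordered pairs (g, h) of permutations of Fin n such that the subgroup of the symmetric group generated by {g, h} is NOT transitive on Fin n is at most ∑_{k=1}^{⌊n/2⌋} C(n, k) · (k!)² · ((n-k)!)². -/
/-!
If `⟨g, h⟩` is not transitive, one of its orbits, or the complement of that orbit, is a set `S`
with `1 ≤ |S| ≤ n / 2` preserved by both `g` and `h`. Exactly `k! (n - k)!` permutations preserve
a given `k`-set, so a union bound over the `C(n, k)` sets of each size `k` gives the estimate.
-/

open SimpleGraph

open Equiv Finset
open scoped Nat

variable {α : Type*} [Fintype α] [DecidableEq α]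

def preservingPerms (s : Finset α) : Finset (Perm α) :=
  {g | ∀ a, g a ∈ s ↔ a ∈ s}

lemma card_preservingPerms (s : Finset α) :
    #(preservingPerms s) = (#s)! * (Fintype.card α - #s)! := by
  have key := DomMulAct.stabilizer_card (fun a : α => decide (a ∈ s))
  have hiff (g : Perm α) :
      (fun a => decide (a ∈ s)) ∘ g = (fun a => decide (a ∈ s)) ↔ ∀ a, g a ∈ s ↔ a ∈ s := by
    simp [funext_iff]
  simp only [hiff, Fintype.prod_bool] at key
  rw [preservingPerms, ← Fintype.card_subtype, key]
  simp [Fintype.card_subtype, filter_not, card_sdiff]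

lemma compl_mem_preservingPerms {s : Finset α} {g : Perm α} (hg : g ∈ preservingPerms s) :
    g ∈ preservingPerms sᶜ := by
  simp_all [preservingPerms]

lemma exists_preserved_of_not_reachable {H : Subgroup (Perm α)} {x y : α}
    (hxy : ∀ g ∈ H, g x ≠ y) :
    ∃ s : Finset α, x ∈ s ∧ y ∉ s ∧ ∀ g ∈ H, g ∈ preservingPerms s := by
  classical
  refine ⟨({z | ∃ g ∈ H, g x = z} : Finset α), by simpa using ⟨1, H.one_mem, rfl⟩,
    by simpa using hxy, fun g hg => ?_⟩
  simp only [preservingPerms, mem_filter, mem_univ, true_and]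
  refine fun a => ⟨fun ⟨g', hg', hg'x⟩ => ⟨g⁻¹ * g', mul_mem (inv_mem hg) hg', ?_⟩,
    fun ⟨g', hg', hg'x⟩ => ⟨g * g', mul_mem hg hg', by simp [hg'x]⟩⟩
  simp [hg'x]

lemma exists_small_preserved_of_not_transitive {H : Subgroup (Perm α)}
    (hH : ¬ ∀ x y : α, ∃ g ∈ H, g x = y) :
    ∃ s : Finset α, #s ∈ Icc 1 (Fintype.card α / 2) ∧ ∀ g ∈ H, g ∈ preservingPerms s := by
  push Not at hH
  obtain ⟨x, y, hxy⟩ := hH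
  obtain ⟨s, hx, hy, hs⟩ := exists_preserved_of_not_reachable hxy
  have hpos : 0 < #s := card_pos.2 ⟨x, hx⟩
  have hlt : #s < Fintype.card α := card_lt_univ_of_notMem hy
  by_cases hsmall : #s ≤ Fintype.card α / 2
  · exact ⟨s, mem_Icc.2 ⟨hpos, hsmall⟩, hs⟩
  · refine ⟨sᶜ, ?_, fun g hg => compl_mem_preservingPerms (hs g hg)⟩
    rw [card_compl, mem_Icc]
    omega

lemma card_not_transitive_pairs_le :
    Nat.card {p : Perm α × Perm α // ¬ ∀ x y : α, ∃ g ∈ Subgroup.closure {p.1, p.2}, g x = y}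
      ≤ ∑ k ∈ Icc 1 (Fintype.card α / 2),
          (Fintype.card α).choose k * (k ! * (Fintype.card α - k)!) ^ 2 := by
  classical
  rw [Nat.card_eq_fintype_card, Fintype.card_subtype]
  calc _ ≤ #((Icc 1 (Fintype.card α / 2)).biUnion fun k => (powersetCard k univ).biUnion
          fun s => preservingPerms s ×ˢ preservingPerms s) := by
        refine card_le_card fun p hp => ?_
        obtain ⟨s, hs, hpres⟩ := exists_small_preserved_of_not_transitive (mem_filter.1 hp).2
        simp only [mem_biUnion, mem_powersetCard_univ, mem_product]
        exact ⟨_, hs, s, rfl, hpres _ (Subgroup.subset_closure (by simp)),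
          hpres _ (Subgroup.subset_closure (by simp))⟩
    _ ≤ ∑ k ∈ Icc 1 (Fintype.card α / 2), ∑ s ∈ powersetCard k univ,
          #(preservingPerms s ×ˢ preservingPerms s) :=
        card_biUnion_le.trans (sum_le_sum fun k _ => card_biUnion_le)
    _ = _ := by
        refine sum_congr rfl fun k _ => ?_
        rw [sum_congr rfl fun s hs => by
          rw [card_product, ← sq, card_preservingPerms, mem_powersetCard_univ.1 hs]]
        simp only [sum_const, card_powersetCard, card_univ, smul_eq_mul]

theorem card_non_transitive_pairs_le_general (n : ℕ) :
    Nat.card {p : Equiv.Perm (Fin n) × Equiv.Perm (Fin n) //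
        ¬ ∀ x y : Fin n, ∃ g ∈ Subgroup.closure {p.1, p.2}, g x = y}
      ≤ ∑ k ∈ Finset.Icc 1 (n / 2),
          Nat.choose n k * (k.factorial) ^ 2 * ((n - k).factorial) ^ 2 := by
  simpa [mul_pow, mul_assoc] using card_not_transitive_pairs_le (α := Fin n)

theorem card_non_transitive_pairs_le (n : ℕ) (hn : 2 ≤ n) :
    Nat.card {p : Equiv.Perm (Fin n) × Equiv.Perm (Fin n) //
        ¬ ∀ x y : Fin n, ∃ g ∈ Subgroup.closure {p.1, p.2}, g x = y}
      ≤ ∑ k ∈ Finset.Icc 1 (n / 2),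
          Nat.choose n k * (k.factorial) ^ 2 * ((n - k).factorial) ^ 2 :=
  card_non_transitive_pairs_le_general n
end
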